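/- arXiv:2202.13037 — 6 statements merged into one kernel-verified Lean document; each statement's English description precedes it below -/
import Mathlib

section
/- Let N ≥ 1, let τ_1, …, τ_N and f_1^l, …, f_N^l be positive reals, δ ≥ 1, c > 0, k_e > 0, f_e^max > 0, and set τ = Σ_{i=1}^N τ_i and Δ = δ·Σ_{i=1}^N f_i^l. Consider maximizing G(p, f_e, f_RSU) = Σ_{i=1}^N (τ_i − f_i^l·δ·p) − k_e·f_e² − c·f_RSU over all (p, f_e, f_RSU) with p > 0, 0 ≤ f_e ≤ f_e^max, f_RSU ≥ 0, and τ/p − Δ = f_e + f_RSU. Define p* = √(c·τ/Δ), f_e* = min{c/(2k_e), f_e^max}, and f_RSU* = √(τ·Δ/c) − Δ − f_e*. If f_RSU* ≥ 0, then (p*, f_e*, f_RSU*) is feasible for this problem and G(p*, f_e*, f_RSU*) ≥ G(p, f_e, f_RSU) for every feasible (p, f_e, f_RSU). -/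
private lemma quad_bound (c ke fe : ℝ) (hke : 0 < ke) :
    4 * ke * (c * fe - ke * fe ^ 2) ≤ c ^ 2 := by
  nlinarith [sq_nonneg (2 * ke * fe - c)]

private lemma quad_mono (c ke fe fm : ℝ) (hke : 0 < ke) (hle : fe ≤ fm)
    (hv : fm < c / (2 * ke)) :
    c * fe - ke * fe ^ 2 ≤ c * fm - ke * fm ^ 2 := by
  have h2 : 0 ≤ c - ke * (fm + fe) := by
    have : fm * (2 * ke) < c := (lt_div_iff₀ (by linarith)).mp hv
    nlinarith
  nlinarith [mul_nonneg (sub_nonneg.2 hle) h2]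

private lemma quad_aux (c ke fe v : ℝ) (hke : 0 < ke)
    (h1 : 4 * ke * (c * fe - ke * fe ^ 2) ≤ c ^ 2)
    (h2 : 4 * ke * (c * v - ke * v ^ 2) = c ^ 2) :
    c * fe - ke * fe ^ 2 ≤ c * v - ke * v ^ 2 := by
  nlinarith [h1, h2, hke]

/-- Proposition 1 of the paper: when all users offload, the MEC server's
utility `G p f_e f_RSU = Σ (τ_i - f_i^l δ p) - k_e f_e² - c f_RSU` subject to
`p > 0`, `0 ≤ f_e ≤ f_e^max`, `f_RSU ≥ 0` and the balance constraint
`τ/p - Δ = f_e + f_RSU` is maximized at `p* = √(cτ/Δ)`,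
`f_e* = min (c/(2k_e)) f_e^max`, `f_RSU* = √(τΔ/c) - Δ - f_e*`
(provided `f_RSU* ≥ 0`). -/
theorem stmt_2 (N : ℕ) (hN : 1 ≤ N) (τ fl : Fin N → ℝ)
    (hτ : ∀ i, 0 < τ i) (hfl : ∀ i, 0 < fl i)
    (δ c ke femax : ℝ) (hδ : 1 ≤ δ) (hc : 0 < c) (hke : 0 < ke) (hfe : 0 < femax)
    (T Δ : ℝ) (hT : T = ∑ i, τ i) (hΔ : Δ = δ * ∑ i, fl i)
    (G : ℝ → ℝ → ℝ → ℝ)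
    (hG : ∀ p fe fr, G p fe fr = (∑ i, (τ i - fl i * δ * p)) - ke * fe ^ 2 - c * fr)
    (pstar festar frstar : ℝ)
    (hps : pstar = Real.sqrt (c * T / Δ))
    (hfes : festar = min (c / (2 * ke)) femax)
    (hfrs : frstar = Real.sqrt (T * Δ / c) - Δ - festar)
    (hfr0 : 0 ≤ frstar) :
    (0 < pstar ∧ 0 ≤ festar ∧ festar ≤ femax ∧ 0 ≤ frstar ∧
      T / pstar - Δ = festar + frstar) ∧
    (∀ p fe fr : ℝ, 0 < p → 0 ≤ fe → fe ≤ femax → 0 ≤ fr →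
      T / p - Δ = fe + fr → G p fe fr ≤ G pstar festar frstar) := by
  have hne : (Finset.univ : Finset (Fin N)).Nonempty :=
    ⟨⟨0, hN⟩, Finset.mem_univ _⟩
  have hTpos : 0 < T := by
    rw [hT]; exact Finset.sum_pos (fun i _ => hτ i) hne
  have hΔpos : 0 < Δ := by
    rw [hΔ]
    exact mul_pos (lt_of_lt_of_le one_pos hδ) (Finset.sum_pos (fun i _ => hfl i) hne)
  -- positivity of pstar
  have hppos : 0 < pstar := by
    rw [hps]
    exact Real.sqrt_pos.mpr (div_pos (mul_pos hc hTpos) hΔpos)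
  -- s = sqrt(c*T*Δ)
  set s : ℝ := Real.sqrt (c * T * Δ) with hs
  have hs2 : s ^ 2 = c * T * Δ := Real.sq_sqrt (by positivity)
  have hsnn : 0 ≤ s := Real.sqrt_nonneg _
  -- e1 : Δ * pstar = s
  have e1 : Δ * pstar = s := by
    rw [hps, hs, ← Real.sqrt_sq hΔpos.le, ← Real.sqrt_mul (by positivity)]
    congr 1
    field_simp
    ring
    rw [Real.sq_sqrt (by positivity)]
  -- e2 : c * sqrt(T*Δ/c) = s
  have e2 : c * Real.sqrt (T * Δ / c) = s := by
    rw [hs, ← Real.sqrt_sq hc.le, ← Real.sqrt_mul (by positivity)]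
    congr 1
    field_simp
    ring
    rw [Real.sq_sqrt (by positivity)]
  -- e3 : T / pstar = sqrt (T*Δ/c)
  have e3 : T / pstar = Real.sqrt (T * Δ / c) := by
    have hmul : pstar * Real.sqrt (T * Δ / c) = T := by
      rw [hps, ← Real.sqrt_mul (by positivity)]
      have : c * T / Δ * (T * Δ / c) = T ^ 2 := by field_simp
      rw [this, Real.sqrt_sq hTpos.le]
    rw [div_eq_iff hppos.ne']
    linarith [hmul]
  have hfes0 : 0 ≤ festar := by
    rw [hfes]
    exact le_min (by positivity) hfe.le
  have hfesmax : festar ≤ femax := by rw [hfes]; exact min_le_right _ _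
  have hbal : T / pstar - Δ = festar + frstar := by
    rw [e3, hfrs]; ring
  refine ⟨⟨hppos, hfes0, hfesmax, hfr0, hbal⟩, ?_⟩
  intro p fe fr hp hfe0 hfemax hfr hbal'
  -- sum simplification
  have hsum : ∀ q : ℝ, (∑ i, (τ i - fl i * δ * q)) = T - Δ * q := by
    intro q
    rw [Finset.sum_sub_distrib, hT, hΔ, ← Finset.sum_mul, ← Finset.sum_mul]
    ring
  rw [hG, hG, hsum, hsum]
  -- express fr via constraint
  have hfr' : fr = T / p - Δ - fe := by linarith
  -- AM-GM : 2 * s ≤ Δ * p + c * (T / p)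
  have hq : p * (T / p) = T := by field_simp
  have key : 2 * s * p ≤ Δ * p ^ 2 + c * T := by
    nlinarith [sq_nonneg (s - Δ * p), hs2, hΔpos]
  have hAM : 2 * s ≤ Δ * p + c * (T / p) := by
    have h' : 2 * s - Δ * p ≤ c * T / p := by
      rw [le_div_iff₀ hp]; nlinarith [key]
    have h'' : c * (T / p) = c * T / p := by ring
    linarith [h'']
  -- quadratic part : c * fe - ke * fe^2 ≤ c * festar - ke * festar^2
  have hquad : c * fe - ke * fe ^ 2 ≤ c * festar - ke * festar ^ 2 := by
    rcases le_or_gt (c / (2 * ke)) femax with h | h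
    · have : festar = c / (2 * ke) := by rw [hfes, min_eq_left h]
      rw [this]
      have h2 : 4 * ke * (c * (c / (2 * ke)) - ke * (c / (2 * ke)) ^ 2) = c ^ 2 := by
        field_simp; ring
      exact quad_aux c ke fe _ hke (quad_bound c ke fe hke) h2
    · have hst : festar = femax := by rw [hfes, min_eq_right h.le]
      rw [hst]
      exact quad_mono c ke fe femax hke hfemax h
  -- rewrite goal values
  have hGstar : T - Δ * pstar - ke * festar ^ 2 - c * frstar
      = T + c * Δ - 2 * s + (c * festar - ke * festar ^ 2) := by
    rw [hfrs]
    have : c * (Real.sqrt (T * Δ / c) - Δ - festar)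
        = s - c * Δ - c * festar := by rw [← e2]; ring
    linarith [e1, this]
  have hGp : T - Δ * p - ke * fe ^ 2 - c * fr
      = T + c * Δ - (Δ * p + c * (T / p)) + (c * fe - ke * fe ^ 2) := by
    rw [hfr']; ring
  linarith [hAM, hquad, hGstar, hGp]
end

section
/- Let M ≥ 2, let θ_1, …, θ_M be positive reals, k_v > 0, and let {(f_m, p_m)}_{m=1}^M be a contract with f_m ≥ 0 for all m, satisfying the incentive compatibility conditions θ_m·p_m − k_v·f_m² ≥ θ_m·p_j − k_v·f_j² for all m ≠ j. Then for any indices i ≠ j: p_i > p_j if and only if f_i > f_j. -/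
/-- Lemma 2 of the paper: under any incentive-compatible contract with
nonnegative resources, `p_i > p_j` iff `f_i > f_j` for any distinct types. -/
theorem stmt_7 (M : ℕ) (hM : 2 ≤ M) (θ f p : ℕ → ℝ) (kv : ℝ) (hkv : 0 < kv)
    (hθ : ∀ m ∈ Finset.Icc 1 M, 0 < θ m)
    (hf : ∀ m ∈ Finset.Icc 1 M, 0 ≤ f m)
    (hIC : ∀ m ∈ Finset.Icc 1 M, ∀ j ∈ Finset.Icc 1 M, m ≠ j →
      θ m * p j - kv * f j ^ 2 ≤ θ m * p m - kv * f m ^ 2) :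
    ∀ i ∈ Finset.Icc 1 M, ∀ j ∈ Finset.Icc 1 M, i ≠ j → (p j < p i ↔ f j < f i) := by
  intro i hi j hj hij
  have hICi := hIC i hi j hj hij
  have hICj := hIC j hj i hi (Ne.symm hij)
  have hθi := hθ i hi
  have hθj := hθ j hj
  have hfi := hf i hi
  have hfj := hf j hj
  constructor
  · intro hp
    -- θj(pi - pj) ≤ kv(fi² - fj²), LHS > 0
    have h1 : 0 < kv * f i ^ 2 - kv * f j ^ 2 := by nlinarith
    have hsq : f j ^ 2 < f i ^ 2 := by nlinarith
    nlinarith [sq_nonneg (f i - f j), sq_nonneg (f i + f j)]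
  · intro hfij
    have hsq : f j ^ 2 < f i ^ 2 := by nlinarith
    nlinarith
end

section
/- Let M ≥ 2, let 0 < θ_1 ≤ θ_2 ≤ … ≤ θ_M, k_v > 0, and let {(f_m, p_m)}_{m=1}^M be a contract with p_1 ≤ p_2 ≤ … ≤ p_M satisfying the local downward incentive compatibility conditions θ_m·p_m − k_v·f_m² ≥ θ_m·p_{m−1} − k_v·f_{m−1}² for m = 2, …, M. Then for all indices j < m one has θ_m·p_m − k_v·f_m² ≥ θ_m·p_j − k_v·f_j², i.e. all downward incentive compatibility constraints hold. -/
/-- Telescoping step in the proof of Lemma 4: adjacent downward incentive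
compatibility constraints plus monotone payments imply all downward
incentive compatibility constraints. -/
theorem stmt_10 (M : ℕ) (hM : 2 ≤ M) (θ f p : ℕ → ℝ) (kv : ℝ) (hkv : 0 < kv)
    (hθ1 : 0 < θ 1) (hθmono : ∀ m, 1 ≤ m → m < M → θ m ≤ θ (m + 1))
    (hpmono : ∀ m, 1 ≤ m → m < M → p m ≤ p (m + 1))
    (hLDIC : ∀ m, 2 ≤ m → m ≤ M →
      θ m * p (m - 1) - kv * f (m - 1) ^ 2 ≤ θ m * p m - kv * f m ^ 2) :
    ∀ m j : ℕ, 1 ≤ j → j < m → m ≤ M →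
      θ m * p j - kv * f j ^ 2 ≤ θ m * p m - kv * f m ^ 2 := by
  -- monotonicity of θ between arbitrary indices
  have hθle : ∀ a b : ℕ, 1 ≤ a → a ≤ b → b ≤ M → θ a ≤ θ b := by
    intro a b ha hab hbM
    induction b with
    | zero => omega
    | succ n ih =>
      rcases Nat.lt_or_ge a (n+1) with h | h
      · have h1 : θ a ≤ θ n := ih (by omega) (by omega)
        have h2 : θ n ≤ θ (n+1) := hθmono n (by omega) (by omega)
        linarith
      · have : a = n + 1 := by omega
        simp [this]
  have hθpos : ∀ a : ℕ, 1 ≤ a → a ≤ M → 0 < θ a := by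
    intro a ha haM
    have := hθle 1 a le_rfl ha haM
    linarith
  -- main claim by induction on the gap d
  have key : ∀ d : ℕ, 1 ≤ d → ∀ j : ℕ, 1 ≤ j → j + d ≤ M →
      θ (j + d) * p j - kv * f j ^ 2 ≤ θ (j + d) * p (j + d) - kv * f (j + d) ^ 2 := by
    intro d
    induction d with
    | zero => omega
    | succ n ih =>
      intro _ j hj hjM
      rcases Nat.eq_zero_or_pos n with hn | hn
      · subst hn
        have := hLDIC (j + 1) (by omega) (by omega)
        simpa using this
      · -- step from j to j+1, then IH
        have hLD := hLDIC (j + 1) (by omega) (by omega)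
        simp only [Nat.add_sub_cancel] at hLD
        have hp : p j ≤ p (j + 1) := hpmono j hj (by omega)
        have hθ : θ (j + 1) ≤ θ (j + (n + 1)) := hθle (j+1) (j + (n+1)) (by omega) (by omega) hjM
        have hθp : (0:ℝ) < θ (j + 1) := hθpos (j+1) (by omega) (by omega)
        have step : θ (j + (n+1)) * p j - kv * f j ^ 2 ≤
            θ (j + (n+1)) * p (j + 1) - kv * f (j + 1) ^ 2 := by
          nlinarith [mul_le_mul_of_nonneg_right hθ (sub_nonneg.2 hp)]
        have ihh := ih (by omega) (j + 1) (by omega) (by omega)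
        have heq : j + 1 + n = j + (n + 1) := by omega
        rw [heq] at ihh
        linarith
  intro m j hj hjm hmM
  have := key (m - j) (by omega) j hj (by omega)
  have heq : j + (m - j) = m := by omega
  rwa [heq] at this
end

section
/- Let M ≥ 2, let 0 < θ_1 ≤ θ_2 ≤ … ≤ θ_M, k_v > 0, l_1, …, l_M > 0, and let {(f_m, p_m)}_{m=1}^M be a contract satisfying individual rationality θ_m·p_m − k_v·f_m² ≥ 0 for all m and incentive compatibility θ_m·p_m − k_v·f_m² ≥ θ_m·p_j − k_v·f_j² for all m ≠ j, with f_m ≥ 0 for all m. If the type-1 IR constraint is slack, i.e. θ_1·p_1 − k_v·f_1² > 0, then for every ε with 0 < ε ≤ (θ_1·p_1 − k_v·f_1²)/θ_M, the modified contract {(f_m, p_m − ε)}_{m=1}^M still satisfies all IR and IC constraints and has strictly smaller total payment: Σ_{m=1}^M l_m·θ_m·(p_m − ε) < Σ_{m=1}^M l_m·θ_m·p_m. -/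
/-- The payment-reduction step underlying Lemma 5: if the type-1 IR constraint
is slack, then uniformly decreasing all payments by a small `ε` preserves all
IR and IC constraints and strictly reduces the RSU's total payment. -/
theorem stmt_11 (M : ℕ) (hM : 2 ≤ M) (θ f p l : ℕ → ℝ) (kv : ℝ) (hkv : 0 < kv)
    (hθ1 : 0 < θ 1) (hθmono : ∀ m, 1 ≤ m → m < M → θ m ≤ θ (m + 1))
    (hl : ∀ m ∈ Finset.Icc 1 M, 0 < l m)
    (hf : ∀ m ∈ Finset.Icc 1 M, 0 ≤ f m)
    (hIR : ∀ m ∈ Finset.Icc 1 M, 0 ≤ θ m * p m - kv * f m ^ 2)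
    (hIC : ∀ m ∈ Finset.Icc 1 M, ∀ j ∈ Finset.Icc 1 M, m ≠ j →
      θ m * p j - kv * f j ^ 2 ≤ θ m * p m - kv * f m ^ 2)
    (hslack : 0 < θ 1 * p 1 - kv * f 1 ^ 2)
    (ε : ℝ) (hε : 0 < ε) (hεle : ε ≤ (θ 1 * p 1 - kv * f 1 ^ 2) / θ M) :
    (∀ m ∈ Finset.Icc 1 M, 0 ≤ θ m * (p m - ε) - kv * f m ^ 2) ∧
    (∀ m ∈ Finset.Icc 1 M, ∀ j ∈ Finset.Icc 1 M, m ≠ j →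
      θ m * (p j - ε) - kv * f j ^ 2 ≤ θ m * (p m - ε) - kv * f m ^ 2) ∧
    (∑ m ∈ Finset.Icc 1 M, l m * θ m * (p m - ε)) <
      ∑ m ∈ Finset.Icc 1 M, l m * θ m * p m := by
  -- monotonicity: θ is monotone on [1, M]
  have hmono : ∀ a b, 1 ≤ a → a ≤ b → b ≤ M → θ a ≤ θ b := by
    intro a b ha hab hbM
    induction b with
    | zero => omega
    | succ n ih =>
      rcases Nat.lt_or_ge a (n+1) with h | h
      · have han : a ≤ n := by omega
        have h1n : 1 ≤ n := by omega
        exact (ih (by omega) (by omega)).trans (hθmono n h1n (by omega))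
      · have : a = n + 1 := by omega
        simp [this]
  have hθpos : ∀ m, 1 ≤ m → m ≤ M → 0 < θ m := fun m h1 h2 =>
    lt_of_lt_of_le hθ1 (hmono 1 m le_rfl h1 h2)
  have hθM : 0 < θ M := hθpos M (by omega) le_rfl
  have hεθM : ε * θ M ≤ θ 1 * p 1 - kv * f 1 ^ 2 := by
    rw [← le_div_iff₀ hθM] at *; exact hεle
  have h1mem : (1 : ℕ) ∈ Finset.Icc 1 M := by simp; omega
  -- key: θ m * ε ≤ θ m * p m - kv * f m ^ 2 for m in [1,M]
  have hkey : ∀ m ∈ Finset.Icc 1 M, θ m * ε ≤ θ m * p m - kv * f m ^ 2 := by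
    intro m hm
    simp only [Finset.mem_Icc] at hm
    have hθm : 0 < θ m := hθpos m hm.1 hm.2
    have hθmM : θ m ≤ θ M := hmono m M hm.1 hm.2 le_rfl
    have hθε : θ m * ε ≤ ε * θ M := by
      rw [mul_comm]
      exact mul_le_mul_of_nonneg_left hθmM hε.le
    rcases eq_or_ne m 1 with rfl | hne
    · exact hθε.trans hεθM
    · -- p 1 > 0 since θ 1 * p 1 > kv * f 1 ^ 2 ≥ 0
      have hf1 : 0 ≤ kv * f 1 ^ 2 := by positivity
      have hp1 : 0 < p 1 := by
        nlinarith
      have hic := hIC m (by simp; omega) 1 h1mem hne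
      have h1m : θ 1 ≤ θ m := hmono 1 m le_rfl hm.1 hm.2
      have : θ 1 * p 1 - kv * f 1 ^ 2 ≤ θ m * p 1 - kv * f 1 ^ 2 := by
        nlinarith
      nlinarith
  refine ⟨fun m hm => by have := hkey m hm; nlinarith [mul_pos (hθpos m (by simpa using (Finset.mem_Icc.mp hm).1) (Finset.mem_Icc.mp hm).2) hε], ?_, ?_⟩
  · intro m hm j hj hne
    have := hIC m hm j hj hne
    nlinarith
  · apply Finset.sum_lt_sum_of_nonempty
    · exact ⟨1, h1mem⟩
    · intro m hm
      simp only [Finset.mem_Icc] at hm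
      have hlm := hl m (by simp [hm])
      have hθm := hθpos m hm.1 hm.2
      nlinarith [mul_pos (mul_pos hlm hθm) hε]
end

section
/- Let M ≥ 2, let 0 < θ_1 ≤ θ_2 ≤ … ≤ θ_M, k_v > 0, l_1, …, l_M > 0, and fix resources f_1, …, f_M ≥ 0. Suppose the payments p_1, …, p_M minimize the total payment Σ_{m=1}^M l_m·θ_m·p'_m over all payment vectors (p'_1, …, p'_M) for which the contract {(f_m, p'_m)}_{m=1}^M satisfies individual rationality θ_m·p'_m − k_v·f_m² ≥ 0 for all m and incentive compatibility θ_m·p'_m − k_v·f_m² ≥ θ_m·p'_j − k_v·f_j² for all m ≠ j, and suppose (p_1, …, p_M) itself is such a feasible vector. Then the type-1 IR constraint is active: θ_1·p_1 − k_v·f_1² = 0. -/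
lemma theta_chain (M : ℕ) (θ : ℕ → ℝ)
    (hθmono : ∀ m, 1 ≤ m → m < M → θ m ≤ θ (m + 1)) :
    ∀ a b, 1 ≤ a → a ≤ b → b ≤ M → θ a ≤ θ b := by
  intro a b ha hab hbM
  induction b with
  | zero => omega
  | succ n ih =>
    rcases Nat.eq_or_lt_of_le hab with h | h
    · rw [h]
    · have hn : a ≤ n := by omega
      have h1 : 1 ≤ n := by omega
      exact le_trans (ih hn (by omega)) (hθmono n h1 (by omega))

/-- The IR part of Lemma 5 of the paper: if the payments minimize the RSU's
total payment among all IR- and IC-feasible payment vectors (with resources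
fixed), then the type-1 IR constraint is active. -/
theorem stmt_12 (M : ℕ) (hM : 2 ≤ M) (θ f l : ℕ → ℝ) (kv : ℝ) (hkv : 0 < kv)
    (hθ1 : 0 < θ 1) (hθmono : ∀ m, 1 ≤ m → m < M → θ m ≤ θ (m + 1))
    (hl : ∀ m ∈ Finset.Icc 1 M, 0 < l m)
    (hf : ∀ m ∈ Finset.Icc 1 M, 0 ≤ f m)
    (p : ℕ → ℝ)
    (hIR : ∀ m ∈ Finset.Icc 1 M, 0 ≤ θ m * p m - kv * f m ^ 2)
    (hIC : ∀ m ∈ Finset.Icc 1 M, ∀ j ∈ Finset.Icc 1 M, m ≠ j →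
      θ m * p j - kv * f j ^ 2 ≤ θ m * p m - kv * f m ^ 2)
    (hopt : ∀ p' : ℕ → ℝ,
      (∀ m ∈ Finset.Icc 1 M, 0 ≤ θ m * p' m - kv * f m ^ 2) →
      (∀ m ∈ Finset.Icc 1 M, ∀ j ∈ Finset.Icc 1 M, m ≠ j →
        θ m * p' j - kv * f j ^ 2 ≤ θ m * p' m - kv * f m ^ 2) →
      ∑ m ∈ Finset.Icc 1 M, l m * θ m * p m ≤ ∑ m ∈ Finset.Icc 1 M, l m * θ m * p' m) :
    θ 1 * p 1 - kv * f 1 ^ 2 = 0 := by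
  by_contra h
  have h1mem : (1 : ℕ) ∈ Finset.Icc 1 M := Finset.mem_Icc.mpr ⟨le_refl 1, by omega⟩
  have hε : 0 < θ 1 * p 1 - kv * f 1 ^ 2 :=
    lt_of_le_of_ne (hIR 1 h1mem) (Ne.symm h)
  set ε := θ 1 * p 1 - kv * f 1 ^ 2 with hεdef
  have chain := theta_chain M θ hθmono
  have hθpos : ∀ m ∈ Finset.Icc 1 M, 0 < θ m := by
    intro m hm
    rw [Finset.mem_Icc] at hm
    exact lt_of_lt_of_le hθ1 (chain 1 m le_rfl hm.1 hm.2)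
  have hθM : 0 < θ M := hθpos M (Finset.mem_Icc.mpr ⟨by omega, le_rfl⟩)
  -- p 1 ≥ 0
  have hp1 : 0 ≤ p 1 := by
    have h0 : 0 ≤ kv * f 1 ^ 2 := by positivity
    nlinarith
  -- utility of each type is at least ε
  have humε : ∀ m ∈ Finset.Icc 1 M, ε ≤ θ m * p m - kv * f m ^ 2 := by
    intro m hm
    rcases eq_or_ne m 1 with rfl | hne
    · exact le_refl _
    · have hic := hIC m hm 1 h1mem hne
      have hmθ : θ 1 ≤ θ m := by
        rw [Finset.mem_Icc] at hm
        exact chain 1 m le_rfl hm.1 hm.2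
      nlinarith [mul_le_mul_of_nonneg_right hmθ hp1]
  set c := ε / θ M with hcdef
  have hc : 0 < c := div_pos hε hθM
  have key := hopt (fun m => p m - c)
    (by
      intro m hm
      have hmθM : θ m ≤ θ M := by
        rw [Finset.mem_Icc] at hm
        exact chain m M hm.1 hm.2 le_rfl
      have hθc : θ m * c ≤ ε := by
        rw [hcdef]
        calc θ m * (ε / θ M) ≤ θ M * (ε / θ M) :=
              mul_le_mul_of_nonneg_right hmθM (le_of_lt (div_pos hε hθM))
          _ = ε := by field_simp
      have := humε m hm
      nlinarith
    )
    (by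
      intro m hm j hj hne
      have hic := hIC m hm j hj hne
      nlinarith
    )
  -- total payment strictly decreases: contradiction
  have hsumpos : 0 < ∑ m ∈ Finset.Icc 1 M, l m * θ m * c := by
    apply Finset.sum_pos
    · intro m hm
      have := hl m hm
      have := hθpos m hm
      positivity
    · exact ⟨1, h1mem⟩
  have : ∑ m ∈ Finset.Icc 1 M, l m * θ m * (p m - c)
      = ∑ m ∈ Finset.Icc 1 M, l m * θ m * p m - ∑ m ∈ Finset.Icc 1 M, l m * θ m * c := by
    rw [← Finset.sum_sub_distrib]
    apply Finset.sum_congr rfl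
    intro m _
    ring
  linarith [key, this, hsumpos]
end

section
/- Let M ≥ 2, let 0 < θ_1 ≤ θ_2 ≤ … ≤ θ_M, k_v > 0, and let {(f_m, p_m)}_{m=1}^M be a contract with p_1 ≤ p_2 ≤ … ≤ p_M such that all local downward incentive compatibility constraints are active: θ_m·p_m − k_v·f_m² = θ_m·p_{m−1} − k_v·f_{m−1}² for m = 2, …, M. Then all local upward incentive compatibility constraints hold: θ_m·p_m − k_v·f_m² ≥ θ_m·p_{m+1} − k_v·f_{m+1}² for m = 1, …, M−1. -/
/-- Lemma 6 of the paper: if all local downward incentive compatibility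
constraints are active (and payments are monotone), then all local upward
incentive compatibility constraints are satisfied. -/
theorem stmt_13 (M : ℕ) (hM : 2 ≤ M) (θ f p : ℕ → ℝ) (kv : ℝ) (hkv : 0 < kv)
    (hθ1 : 0 < θ 1) (hθmono : ∀ m, 1 ≤ m → m < M → θ m ≤ θ (m + 1))
    (hpmono : ∀ m, 1 ≤ m → m < M → p m ≤ p (m + 1))
    (hLDIC : ∀ m, 2 ≤ m → m ≤ M →
      θ m * p m - kv * f m ^ 2 = θ m * p (m - 1) - kv * f (m - 1) ^ 2) :
    ∀ m, 1 ≤ m → m ≤ M - 1 →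
      θ m * p (m + 1) - kv * f (m + 1) ^ 2 ≤ θ m * p m - kv * f m ^ 2 := by
  intro m hm1 hmM
  have hmM' : m < M := by omega
  have h := hLDIC (m + 1) (by omega) (by omega)
  simp only [Nat.add_sub_cancel] at h
  have hθ := hθmono m hm1 hmM'
  have hp := hpmono m hm1 hmM'
  nlinarith [mul_le_mul_of_nonneg_right hθ (sub_nonneg.mpr hp)]
end
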